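/- arXiv:1810.06895 — 4 statements merged into one kernel-verified Lean document; each statement's English description precedes it below -/
import Mathlib

section
/- Let α ≥ 0 and β > 0, and let X be a real random variable whose distribution is the Modified Rician distribution MR(α,β). Then X is sub-exponential: there exists a finite constant K (possibly depending on α and β) such that for every real p ≥ 1, (E|X|^p)^{1/p} ≤ Kp; equivalently ‖X‖_{ψ₁} < ∞. -/
/-!
Termwise, `(2k)! ≤ 4ᵏ (k!)²` gives `I₀ ≤ cosh ≤ exp |·|`, and AM-GM `2√(tα) ≤ t/2 + 2α` then bounds
the MR density by `(e^{α/β}/β) e^{-t/(2β)}`. Against this exponential tail the elementary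
`t^p ≤ (4βp)^p e^{t/(4β)}` yields `E|X|^p ≤ 4 e^{α/β} (4βp)^p`, so `K = 16 β e^{α/β}` works.
-/

open MeasureTheory ProbabilityTheory Real

/-- The modified Bessel function of the first kind of order zero,
`I₀(x) = ∑_{k=0}^∞ (x/2)^{2k} / (k!)²`. -/
noncomputable def besselI0 (x : ℝ) : ℝ :=
  ∑' k : ℕ, (x / 2) ^ (2 * k) / ((Nat.factorial k : ℝ)) ^ 2

/-- The Modified Rician density with parameters `α ≥ 0` and `β > 0`:
`p_MR(t) = (1/β) exp(-(t+α)/β) I₀(2√(tα)/β)` for `t ≥ 0`, and `0` for `t < 0`. -/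
noncomputable def mrDensity (α β t : ℝ) : ℝ :=
  if 0 ≤ t then (1 / β) * Real.exp (-((t + α) / β)) * besselI0 (2 * Real.sqrt (t * α) / β)
  else 0

open scoped Nat

lemma factorial_two_mul_le_four_pow_mul_sq (k : ℕ) : (2 * k)! ≤ 4 ^ k * k ! ^ 2 :=
  calc (2 * k)! = Nat.centralBinom k * k ! * k ! := by
        rw [Nat.centralBinom_eq_two_mul_choose,
          ← Nat.choose_mul_factorial_mul_factorial (by omega : k ≤ 2 * k)]
        congr 2
        omega
    _ ≤ 4 ^ k * k ! * k ! := by gcongr; exact Nat.centralBinom_le_four_pow k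
    _ = 4 ^ k * k ! ^ 2 := by ring

lemma besselI0_term_le_cosh_term (x : ℝ) (k : ℕ) :
    (x / 2) ^ (2 * k) / (k ! : ℝ) ^ 2 ≤ x ^ (2 * k) / (2 * k)! := by
  rw [div_pow, div_div, pow_mul (2 : ℝ), show (2 : ℝ) ^ 2 = 4 by norm_num]
  refine div_le_div_of_nonneg_left ((even_two_mul k).pow_nonneg x) (by positivity) ?_
  exact_mod_cast factorial_two_mul_le_four_pow_mul_sq k

lemma summable_besselI0_terms (x : ℝ) :
    Summable fun k : ℕ => (x / 2) ^ (2 * k) / (k ! : ℝ) ^ 2 :=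
  (Real.hasSum_cosh x).summable.of_nonneg_of_le
    (fun k => div_nonneg ((even_two_mul k).pow_nonneg _) (by positivity))
    (besselI0_term_le_cosh_term x)

lemma besselI0_le_cosh (x : ℝ) : besselI0 x ≤ cosh x := by
  rw [cosh_eq_tsum]
  exact (summable_besselI0_terms x).tsum_le_tsum (besselI0_term_le_cosh_term x)
    (Real.hasSum_cosh x).summable

lemma cosh_le_exp_abs (x : ℝ) : cosh x ≤ exp |x| := by
  rw [← cosh_abs, cosh_eq]
  linarith [exp_le_exp.2 (neg_le_self (abs_nonneg x))]

@[fun_prop]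
lemma measurable_besselI0 : Measurable besselI0 :=
  measurable_of_tendsto_metrizable
    (f := fun n x => ∑ k ∈ Finset.range n, (x / 2) ^ (2 * k) / (k ! : ℝ) ^ 2)
    (fun n => by fun_prop)
    (tendsto_pi_nhds.2 fun x => (summable_besselI0_terms x).hasSum.tendsto_sum_nat)

lemma measurable_mrDensity (α β : ℝ) : Measurable (mrDensity α β) :=
  Measurable.ite measurableSet_Ici (by fun_prop) measurable_const

lemma mrDensity_le {α β : ℝ} (hα : 0 ≤ α) (hβ : 0 < β) (t : ℝ) :
    mrDensity α β t ≤ exp (α / β) / β * exp (-t / (2 * β)) := by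
  by_cases ht : 0 ≤ t
  swap
  · rw [mrDensity, if_neg ht]
    positivity
  have hsqrt : 2 * √(t * α) ≤ t / 2 + 2 * α := by
    rw [sqrt_mul ht]
    nlinarith [sq_nonneg (√t - 2 * √α), sq_sqrt ht, sq_sqrt hα]
  have hexponent : -((t + α) / β) + 2 * √(t * α) / β ≤ α / β + -t / (2 * β) := by
    rw [← sub_nonneg]
    have : α / β + -t / (2 * β) - (-((t + α) / β) + 2 * √(t * α) / β)
        = (t / 2 + 2 * α - 2 * √(t * α)) / β := by field_simp; ring
    rw [this]
    exact div_nonneg (by linarith) hβ.le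
  calc mrDensity α β t
      = 1 / β * exp (-((t + α) / β)) * besselI0 (2 * √(t * α) / β) := if_pos ht
    _ ≤ 1 / β * exp (-((t + α) / β)) * exp (2 * √(t * α) / β) := by
        gcongr
        refine (besselI0_le_cosh _).trans ((cosh_le_exp_abs _).trans_eq ?_)
        rw [abs_of_nonneg (by positivity)]
    _ = 1 / β * exp (-((t + α) / β) + 2 * √(t * α) / β) := by rw [mul_assoc, exp_add]
    _ ≤ 1 / β * exp (α / β + -t / (2 * β)) := by gcongr
    _ = exp (α / β) / β * exp (-t / (2 * β)) := by rw [exp_add]; ring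

lemma rpow_le_mul_rpow_mul_exp {t s p : ℝ} (ht : 0 ≤ t) (hs : 0 < s) (hp : 0 < p) :
    t ^ p ≤ (s * p) ^ p * exp (t / s) := by
  have hsp : 0 < s * p := mul_pos hs hp
  have hlin : t ≤ s * p * exp (t / (s * p)) :=
    calc t = s * p * (t / (s * p)) := by field_simp
      _ ≤ s * p * exp (t / (s * p)) := by gcongr; linarith [add_one_le_exp (t / (s * p))]
  calc t ^ p ≤ (s * p * exp (t / (s * p))) ^ p := rpow_le_rpow ht hlin hp.le
    _ = (s * p) ^ p * exp (t / (s * p)) ^ p := mul_rpow hsp.le (exp_pos _).le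
    _ = (s * p) ^ p * exp (t / s) := by rw [← exp_mul]; congr 2; field_simp

lemma integral_abs_rpow_withDensity_le {f : ℝ → ℝ} {C s p : ℝ} (hf : Measurable f) (hC : 0 ≤ C)
    (hs : 0 < s) (hp : 0 < p) (hf_neg : ∀ t < 0, f t = 0)
    (hf_le : ∀ t, 0 < t → f t ≤ C * exp (-t / s)) :
    ∫ t, |t| ^ p ∂(volume.withDensity fun t => ENNReal.ofReal (f t))
      ≤ 2 * C * s * (2 * s * p) ^ p := by
  have hrate : -(2 * s)⁻¹ < 0 := neg_neg_of_pos (by positivity)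
  rw [integral_withDensity_eq_integral_toReal_smul hf.ennreal_ofReal
    (ae_of_all _ fun _ => ENNReal.ofReal_lt_top)]
  simp only [ENNReal.toReal_ofReal', smul_eq_mul]
  have hvanish : ∀ t ∉ Set.Ioi (0 : ℝ), max (f t) 0 * |t| ^ p = 0 := by
    intro t ht
    rw [Set.mem_Ioi, not_lt] at ht
    rcases ht.lt_or_eq with ht | rfl
    · simp [hf_neg t ht]
    · simp [zero_rpow hp.ne']
  have hbound : ∀ t ∈ Set.Ioi (0 : ℝ),
      max (f t) 0 * |t| ^ p ≤ C * (2 * s * p) ^ p * exp (-(2 * s)⁻¹ * t) := by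
    intro t ht
    rw [abs_of_pos ht]
    calc max (f t) 0 * t ^ p ≤ C * exp (-t / s) * ((2 * s * p) ^ p * exp (t / (2 * s))) := by
          refine mul_le_mul (max_le (hf_le t ht) (by positivity)) ?_ (rpow_nonneg ht.le p) (by positivity)
          exact rpow_le_mul_rpow_mul_exp ht.le (by positivity) hp
      _ = C * (2 * s * p) ^ p * exp (-t / s + t / (2 * s)) := by rw [exp_add]; ring
      _ = C * (2 * s * p) ^ p * exp (-(2 * s)⁻¹ * t) := by congr 2; field_simp; ring
  rw [← setIntegral_eq_integral_of_forall_compl_eq_zero hvanish]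
  calc ∫ t in Set.Ioi 0, max (f t) 0 * |t| ^ p
      ≤ ∫ t in Set.Ioi 0, C * (2 * s * p) ^ p * exp (-(2 * s)⁻¹ * t) :=
        integral_mono_of_nonneg (ae_of_all _ fun t => by positivity)
          ((integrableOn_exp_mul_Ioi hrate 0).const_mul _)
          ((ae_restrict_mem measurableSet_Ioi).mono hbound)
    _ = 2 * C * s * (2 * s * p) ^ p := by
        rw [integral_const_mul, integral_exp_mul_Ioi hrate]
        field_simp
        simp

lemma rpow_one_div_le_mul_of_le_mul_rpow {m A B p : ℝ} (hm : 0 ≤ m) (hA : 1 ≤ A) (hB : 0 ≤ B)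
    (hp : 1 ≤ p) (h : m ≤ A * B ^ p) : m ^ (1 / p) ≤ A * B :=
  calc m ^ (1 / p) ≤ (A * B ^ p) ^ (1 / p) := rpow_le_rpow hm h (by positivity)
    _ = A ^ (1 / p) * B := by
        rw [mul_rpow (by positivity) (by positivity), ← rpow_mul hB,
          mul_one_div_cancel (by positivity), rpow_one]
    _ ≤ A * B := by
        refine mul_le_mul_of_nonneg_right ?_ hB
        simpa using rpow_le_rpow_of_exponent_le hA (div_le_one_of_le₀ hp (zero_le_one.trans hp))

theorem mr_subexponential_general
    {Ω : Type*} [MeasurableSpace Ω] (P : Measure Ω)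
    (α β : ℝ) (hα : 0 ≤ α) (hβ : 0 < β)
    (X : Ω → ℝ) (hX : Measurable X)
    (hlaw : Measure.map X P
      = (volume : Measure ℝ).withDensity (fun t => ENNReal.ofReal (mrDensity α β t))) :
    ∃ K : ℝ, ∀ p : ℝ, 1 ≤ p → (∫ ω, |X ω| ^ p ∂P) ^ (1 / p) ≤ K * p := by
  refine ⟨16 * β * exp (α / β), fun p hp => ?_⟩
  have hp0 : 0 < p := zero_lt_one.trans_le hp
  have hmoment : ∫ ω, |X ω| ^ p ∂P ≤ 4 * exp (α / β) * (4 * β * p) ^ p := by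
    rw [← integral_map (f := fun t : ℝ => |t| ^ p) hX.aemeasurable
      (by fun_prop : Measurable fun t : ℝ => |t| ^ p).aestronglyMeasurable, hlaw]
    calc _ ≤ 2 * (exp (α / β) / β) * (2 * β) * (2 * (2 * β) * p) ^ p :=
          integral_abs_rpow_withDensity_le (measurable_mrDensity α β) (by positivity)
            (by positivity) hp0 (fun t ht => if_neg ht.not_ge) fun t _ => mrDensity_le hα hβ t
      _ = 4 * exp (α / β) * (4 * β * p) ^ p := by field_simp; ring_nf
  have hA : 1 ≤ 4 * exp (α / β) := by linarith [one_le_exp (div_nonneg hα hβ.le)]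
  calc (∫ ω, |X ω| ^ p ∂P) ^ (1 / p) ≤ 4 * exp (α / β) * (4 * β * p) :=
        rpow_one_div_le_mul_of_le_mul_rpow (integral_nonneg fun ω => by positivity) hA
          (by positivity) hp hmoment
    _ = 16 * β * exp (α / β) * p := by ring

/-- A Modified Rician random variable `X ∼ MR(α,β)` is sub-exponential: there is a
finite constant `K` such that `(E|X|^p)^{1/p} ≤ Kp` for every real `p ≥ 1`. -/
theorem mr_subexponential
    {Ω : Type*} [MeasurableSpace Ω] (P : Measure Ω) [IsProbabilityMeasure P]
    (α β : ℝ) (hα : 0 ≤ α) (hβ : 0 < β)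
    (X : Ω → ℝ) (hX : Measurable X)
    (hlaw : Measure.map X P
      = (volume : Measure ℝ).withDensity (fun t => ENNReal.ofReal (mrDensity α β t))) :
    ∃ K : ℝ, ∀ p : ℝ, 1 ≤ p → (∫ ω, |X ω| ^ p ∂P) ^ (1 / p) ≤ K * p :=
  mr_subexponential_general P α β hα hβ X hX hlaw
end

section
/- (Even moments of the Rice distribution.) Let ν ≥ 0 and σ > 0, and let n ≥ 0 be a natural number. Then ∫_0^∞ s^{2n} · (s/σ²) · exp(−(s²+ν²)/(2σ²)) · I₀(sν/σ²) ds = σ^{2n} · 2^n · n! · L_n(−ν²/(2σ²)), where L_n is the n-th Laguerre polynomial. -/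
/-!
Expanding `I₀` into its power series turns the integrand into a series of nonnegative multiples
of `s^(2m+1) e^(-b s²)`, whose integrals over `(0, ∞)` are `m! / (2 b^(m+1))`; nonnegativity
justifies integrating termwise. The resulting series `∑ₖ C(n+k, k) tᵏ / k!` is the Cauchy product
of the finite sum `L_n(-t) = ∑ⱼ C(n, j) tʲ / j!` with `eᵗ` (the coefficients match by
Vandermonde's identity `∑ⱼ C(n, j) C(k, j) = C(n+k, k)`), and the factor `eᵗ` cancels the
`e^(-ν²/(2σ²))` of the density.
-/

open MeasureTheory Real

/-- The `n`-th Laguerre polynomial, `L_n(x) = ∑_{k=0}^n (n choose k) (−x)^k / k!`. -/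
noncomputable def laguerre (n : ℕ) (x : ℝ) : ℝ :=
  ∑ k ∈ Finset.range (n + 1), (n.choose k : ℝ) * (-x) ^ k / (Nat.factorial k : ℝ)

open Finset Set
open scoped Nat

theorem Nat.sum_range_choose_mul_choose (n k : ℕ) :
    ∑ j ∈ range (k + 1), n.choose j * k.choose j = (n + k).choose k := by
  rw [Nat.add_choose_eq, Finset.Nat.sum_antidiagonal_eq_sum_range_succ_mk]
  refine sum_congr rfl fun j hj => ?_
  rw [Nat.choose_symm (Nat.lt_succ_iff.mp (mem_range.mp hj))]

theorem sum_range_choose_mul_pow_div_factorial_mul (n k : ℕ) (t : ℝ) :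
    ∑ j ∈ range (k + 1), (n.choose j * t ^ j / j !) * (t ^ (k - j) / (k - j)!)
      = (n + k).choose k * t ^ k / k ! := by
  have hterm : ∀ j ∈ range (k + 1), (n.choose j * t ^ j / j !) * (t ^ (k - j) / (k - j)!)
      = (n.choose j * k.choose j : ℕ) * t ^ k / k ! := by
    intro j hj
    have hjk : j ≤ k := Nat.lt_succ_iff.mp (mem_range.mp hj)
    rw [Nat.cast_mul, Nat.cast_choose ℝ hjk, ← Nat.add_sub_cancel' hjk, pow_add,
      Nat.add_sub_cancel_left]
    field_simp
  rw [sum_congr rfl hterm, ← sum_div, ← sum_mul, ← Nat.cast_sum,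
    Nat.sum_range_choose_mul_choose]

theorem hasSum_choose_mul_pow_div_factorial (n : ℕ) (t : ℝ) :
    HasSum (fun k => ((n + k).choose k : ℝ) * t ^ k / k !) (exp t * laguerre n (-t)) := by
  set f : ℕ → ℝ := fun j => n.choose j * t ^ j / (j ! : ℝ)
  set g : ℕ → ℝ := fun m => t ^ m / (m ! : ℝ)
  have hf_zero : ∀ j ∉ range (n + 1), f j = 0 := fun j hj => by
    simp [f, Nat.choose_eq_zero_of_lt (by simpa using hj : n < j)]
  have hf : Summable fun j => ‖f j‖ :=
    summable_of_ne_finset_zero fun j hj => by rw [hf_zero j hj, norm_zero]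
  have hg : Summable fun m => ‖g m‖ := by
    simpa [g, abs_div, abs_pow] using Real.summable_pow_div_factorial |t|
  have hf_tsum : ∑' j, f j = laguerre n (-t) := by
    simp only [tsum_eq_sum hf_zero, laguerre, neg_neg, f]
  have hg_tsum : ∑' m, g m = exp t := by
    rw [Real.exp_eq_exp_ℝ, NormedSpace.exp_eq_tsum_div]
  have H := hasSum_sum_range_mul_of_summable_norm hf hg
  simp only [hf_tsum, hg_tsum, f, g, sum_range_choose_mul_pow_div_factorial_mul] at H
  rwa [mul_comm]

theorem integrableOn_Ioi_pow_mul_exp_neg_mul_sq {b : ℝ} (hb : 0 < b) (m : ℕ) :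
    IntegrableOn (fun s : ℝ => s ^ m * exp (-b * s ^ 2)) (Ioi 0) := by
  have h := integrableOn_rpow_mul_exp_neg_mul_sq hb (s := m) (by linarith [m.cast_nonneg (α := ℝ)])
  simpa only [Real.rpow_natCast] using h

theorem integral_Ioi_pow_mul_exp_neg_mul_sq {b : ℝ} (hb : 0 < b) (m : ℕ) :
    ∫ s in Ioi 0, s ^ (2 * m + 1) * exp (-b * s ^ 2) = m ! / (2 * b ^ (m + 1)) := by
  have h := integral_rpow_mul_exp_neg_mul_rpow (p := 2) (q := (2 * m + 1 : ℕ)) two_pos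
    (by push_cast; linarith [m.cast_nonneg (α := ℝ)]) hb
  rw [show (((2 * m + 1 : ℕ) : ℝ) + 1) / 2 = m + 1 by push_cast; ring,
    Real.Gamma_nat_eq_factorial, show -(((2 * m + 1 : ℕ) : ℝ) + 1) / 2 = -((m + 1 : ℕ) : ℝ) by
      push_cast; ring, Real.rpow_neg hb.le, Real.rpow_natCast] at h
  simp only [Real.rpow_natCast, Real.rpow_two] at h
  rw [h]
  field_simp

theorem integral_Ioi_pow_mul_exp_neg_mul_sq_mul_besselI0 {b : ℝ} (hb : 0 < b) (c : ℝ) (n : ℕ) :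
    ∫ s in Ioi 0, s ^ (2 * n + 1) * exp (-b * s ^ 2) * besselI0 (c * s)
      = n ! / (2 * b ^ (n + 1)) * (exp (c ^ 2 / (4 * b)) * laguerre n (-(c ^ 2 / (4 * b)))) := by
  set t := c ^ 2 / (4 * b)
  set F : ℕ → ℝ → ℝ := fun k s =>
    ((c / 2) ^ 2) ^ k / (k ! : ℝ) ^ 2 * (s ^ (2 * (n + k) + 1) * exp (-b * s ^ 2))
  have hF_integrable : ∀ k, IntegrableOn (F k) (Ioi 0) := fun k =>
    (integrableOn_Ioi_pow_mul_exp_neg_mul_sq hb _).const_mul _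
  have hF_integral : ∀ k, ∫ s in Ioi 0, F k s
      = n ! / (2 * b ^ (n + 1)) * ((n + k).choose k * t ^ k / k !) := by
    intro k
    have hchoose : ((n + k).choose k : ℝ) * n ! * k ! = (n + k)! := by
      exact_mod_cast Nat.add_choose_mul_factorial_mul_factorial n k
    rw [integral_const_mul, integral_Ioi_pow_mul_exp_neg_mul_sq hb, ← hchoose]
    simp only [t, div_pow, mul_pow]
    field_simp
    ring
  have hF_norm : ∀ k, ∫ s in Ioi 0, ‖F k s‖ = ∫ s in Ioi 0, F k s := fun k =>
    setIntegral_congr_fun measurableSet_Ioi fun s (hs : 0 < s) =>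
      Real.norm_of_nonneg (by positivity)
  have hsum := (hasSum_choose_mul_pow_div_factorial n t).mul_left (n ! / (2 * b ^ (n + 1)))
  have hexpand : ∀ s, s ^ (2 * n + 1) * exp (-b * s ^ 2) * besselI0 (c * s) = ∑' k, F k s := by
    intro s
    rw [besselI0, mul_comm, ← tsum_mul_right]
    refine tsum_congr fun k => ?_
    rw [pow_mul]
    ring
  rw [integral_congr_ae (ae_of_all _ hexpand), ← integral_tsum_of_summable_integral_norm
    hF_integrable (by simpa only [hF_norm, hF_integral] using hsum.summable),
    tsum_congr hF_integral, hsum.tsum_eq]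

theorem rice_even_moment_general (ν σ : ℝ) (hσ : 0 < σ) (n : ℕ) :
    ∫ s in Set.Ioi (0 : ℝ),
        s ^ (2 * n) * ((s / σ ^ 2) * Real.exp (-((s ^ 2 + ν ^ 2) / (2 * σ ^ 2)))
          * besselI0 (s * ν / σ ^ 2))
      = σ ^ (2 * n) * 2 ^ n * (Nat.factorial n : ℝ) * laguerre n (-(ν ^ 2 / (2 * σ ^ 2))) := by
  have hb : 0 < (2 * σ ^ 2)⁻¹ := by positivity
  have hdensity : ∀ s : ℝ, s ^ (2 * n) * ((s / σ ^ 2) * exp (-((s ^ 2 + ν ^ 2) / (2 * σ ^ 2)))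
      * besselI0 (s * ν / σ ^ 2)) = exp (-(ν ^ 2 / (2 * σ ^ 2))) / σ ^ 2 *
        (s ^ (2 * n + 1) * exp (-(2 * σ ^ 2)⁻¹ * s ^ 2) * besselI0 (ν / σ ^ 2 * s)) := by
    intro s
    rw [show -((s ^ 2 + ν ^ 2) / (2 * σ ^ 2)) = -(2 * σ ^ 2)⁻¹ * s ^ 2 + -(ν ^ 2 / (2 * σ ^ 2))
      by ring, exp_add, show s * ν / σ ^ 2 = ν / σ ^ 2 * s by ring]
    ring
  have ht : (ν / σ ^ 2) ^ 2 / (4 * (2 * σ ^ 2)⁻¹) = ν ^ 2 / (2 * σ ^ 2) := by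
    field_simp
    ring
  rw [integral_congr_ae (ae_of_all _ hdensity), integral_const_mul,
    integral_Ioi_pow_mul_exp_neg_mul_sq_mul_besselI0 hb, ht, inv_pow]
  have hcancel : exp (-(ν ^ 2 / (2 * σ ^ 2))) * exp (ν ^ 2 / (2 * σ ^ 2)) = 1 := by
    rw [← exp_add, neg_add_cancel, exp_zero]
  field_simp
  linear_combination (2 * σ ^ 2) ^ (n + 1) * laguerre n (-(ν ^ 2 / (2 * σ ^ 2))) * hcancel

/-- Even moments of the Rice distribution:
`∫_0^∞ s^{2n} p_Rice(s) ds = σ^{2n} 2^n n! L_n(−ν²/(2σ²))`. -/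
theorem rice_even_moment (ν σ : ℝ) (hν : 0 ≤ ν) (hσ : 0 < σ) (n : ℕ) :
    ∫ s in Set.Ioi (0 : ℝ),
        s ^ (2 * n) * ((s / σ ^ 2) * Real.exp (-((s ^ 2 + ν ^ 2) / (2 * σ ^ 2)))
          * besselI0 (s * ν / σ ^ 2))
      = σ ^ (2 * n) * 2 ^ n * (Nat.factorial n : ℝ) * laguerre n (-(ν ^ 2 / (2 * σ ^ 2))) :=
  rice_even_moment_general ν σ hσ n
end

section
/- For every natural number n and every real x ≥ 0, the n-th Laguerre polynomial satisfies |L_n(x)| ≤ exp(x/2). -/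
/-!
Let `He_n` be the probabilists' Hermite polynomials. Taylor expansion together with
`He_n' = n He_{n-1}` gives the Appell identity `He_n(y + a) = ∑ C(n,k) a^k He_{n-k}(y)`, and
repeated integration by parts against `e^{-y²/2}` gives orthogonality
`∫ He_i He_j e^{-y²/2} = δ_{ij} i! √(2π)`. Together they yield
`∫ He_n(y + a) He_n(y - a) e^{-y²/2} dy = n! √(2π) L_n(a²)`.

Since `(y + a)² + (y - a)² = 2y² + 2a²`, multiplying this by `e^{-a²/2}` gives
`∫ F(y + a) F(y - a) dy` with `F(t) = He_n(t) e^{-t²/4}`, and by AM-GM and translation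
invariance its absolute value is at most `∫ F² = n! √(2π)`. Hence `e^{-a²/2} |L_n(a²)| ≤ 1`.
-/

open Real

open Polynomial MeasureTheory Finset
open scoped Nat

theorem Polynomial.eval_add_eq_sum_hasseDeriv {R : Type*} [CommSemiring R] (f : R[X]) (x a : R)
    {n : ℕ} (hn : f.natDegree < n) :
    f.eval (x + a) = ∑ k ∈ range n, (hasseDeriv k f).eval x * a ^ k := by
  rw [add_comm, ← taylor_eval, eval_eq_sum_range' (by rwa [natDegree_taylor])]
  simp only [taylor_coeff]

theorem integrable_eval_mul_exp_neg_sq_div_two (p : ℝ[X]) :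
    Integrable fun y : ℝ => p.eval y * exp (-y ^ 2 / 2) := by
  have hmonomial (i : ℕ) : Integrable fun y : ℝ => y ^ i * exp (-y ^ 2 / 2) := by
    convert integrable_rpow_mul_exp_neg_mul_sq (b := 1 / 2) (by norm_num)
      (s := i) (neg_one_lt_zero.trans_le i.cast_nonneg) using 2 with y
    rw [rpow_natCast]; ring_nf
  simp_rw [eval_eq_sum_range, sum_mul, mul_assoc]
  exact integrable_finsetSum _ fun i _ => (hmonomial i).const_mul _

theorem hasDerivAt_eval_mul_exp_neg_sq_div_two (p : ℝ[X]) (y : ℝ) :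
    HasDerivAt (fun y => p.eval y * exp (-y ^ 2 / 2))
      ((derivative p - X * p).eval y * exp (-y ^ 2 / 2)) y := by
  have hexp : HasDerivAt (fun y : ℝ => -y ^ 2 / 2) (-y) y := by
    refine ((hasDerivAt_pow 2 y).neg.div_const 2).congr_deriv ?_
    ring
  refine ((p.hasDerivAt y).mul hexp.exp).congr_deriv ?_
  rw [eval_sub, eval_mul, eval_X]
  ring

theorem integral_eval_derivative_sub_X_mul_mul_exp_neg_sq_div_two (p : ℝ[X]) :
    ∫ y, (derivative p - X * p).eval y * exp (-y ^ 2 / 2) = 0 :=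
  integral_eq_zero_of_hasDerivAt_of_integrable (hasDerivAt_eval_mul_exp_neg_sq_div_two p)
    (integrable_eval_mul_exp_neg_sq_div_two _) (integrable_eval_mul_exp_neg_sq_div_two p)

theorem integral_exp_neg_sq_div_two : ∫ y : ℝ, exp (-y ^ 2 / 2) = √(2 * π) := by
  convert integral_gaussian (1 / 2) using 2 with y <;> ring_nf

noncomputable def realHermite (n : ℕ) : ℝ[X] := (hermite n).map (Int.castRingHom ℝ)

namespace realHermite

@[simp] theorem zero : realHermite 0 = 1 := by simp [realHermite]

theorem succ (n : ℕ) :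
    realHermite (n + 1) = X * realHermite n - derivative (realHermite n) := by
  simp [realHermite, hermite_succ, derivative_map]

theorem derivative_succ (n : ℕ) :
    derivative (realHermite (n + 1)) = ((n + 1 : ℕ) : ℝ) • realHermite n := by
  induction n with
  | zero => simp [succ]
  | succ n ih =>
    rw [succ (n + 1), derivative_sub, derivative_mul, derivative_X, ih, derivative_smul, succ n]
    push_cast
    rw [one_mul, mul_smul_comm]
    module

theorem derivative_eq (n : ℕ) : derivative (realHermite n) = (n : ℝ) • realHermite (n - 1) := by
  cases n with
  | zero => simp
  | succ n => exact derivative_succ n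

theorem iterate_derivative (n k : ℕ) :
    derivative^[k] (realHermite n) = (n.descFactorial k : ℝ) • realHermite (n - k) := by
  induction k with
  | zero => simp
  | succ k ih =>
    rw [Function.iterate_succ_apply', ih, derivative_smul, derivative_eq, smul_smul,
      Nat.descFactorial_succ, Nat.sub_sub, Nat.cast_mul, mul_comm]

theorem hasseDeriv_eq (n k : ℕ) :
    hasseDeriv k (realHermite n) = (n.choose k : ℝ) • realHermite (n - k) := by
  have h := congrFun (factorial_smul_hasseDeriv (R := ℝ) (k := k)) (realHermite n)
  rw [LinearMap.smul_apply, iterate_derivative, Nat.descFactorial_eq_factorial_mul_choose,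
    Nat.cast_mul, ← smul_smul, Nat.cast_smul_eq_nsmul] at h
  exact nsmul_right_injective (Nat.factorial_ne_zero k) h

theorem natDegree_eq (n : ℕ) : (realHermite n).natDegree = n := by
  rw [realHermite, natDegree_map_eq_of_injective (RingHom.injective_int _), natDegree_hermite]

theorem eval_add (n : ℕ) (y a : ℝ) : (realHermite n).eval (y + a) =
    ∑ k ∈ range (n + 1), (n.choose k : ℝ) * a ^ k * (realHermite (n - k)).eval y := by
  rw [eval_add_eq_sum_hasseDeriv _ _ _ (n := n + 1) (by rw [natDegree_eq]; omega)]
  refine sum_congr rfl fun k _ => ?_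
  rw [hasseDeriv_eq, eval_smul, smul_eq_mul]
  ring

end realHermite

theorem integral_eval_mul_realHermite_succ (p : ℝ[X]) (k : ℕ) :
    ∫ y, (p * realHermite (k + 1)).eval y * exp (-y ^ 2 / 2) =
      ∫ y, (derivative p * realHermite k).eval y * exp (-y ^ 2 / 2) := by
  have h := integral_eval_derivative_sub_X_mul_mul_exp_neg_sq_div_two (p * realHermite k)
  rw [show derivative (p * realHermite k) - X * (p * realHermite k) =
      derivative p * realHermite k - p * realHermite (k + 1) by
        rw [realHermite.succ, derivative_mul]; ring] at h
  simp only [eval_sub, sub_mul] at h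
  rw [integral_sub (integrable_eval_mul_exp_neg_sq_div_two _)
    (integrable_eval_mul_exp_neg_sq_div_two _)] at h
  linarith

theorem integral_eval_mul_realHermite (p : ℝ[X]) (k : ℕ) :
    ∫ y, (p * realHermite k).eval y * exp (-y ^ 2 / 2) =
      ∫ y, (derivative^[k] p).eval y * exp (-y ^ 2 / 2) := by
  induction k generalizing p with
  | zero => simp
  | succ k ih => rw [integral_eval_mul_realHermite_succ, ih, Function.iterate_succ_apply]

theorem integral_eval_realHermite (m : ℕ) :
    ∫ y, (realHermite m).eval y * exp (-y ^ 2 / 2) = if m = 0 then √(2 * π) else 0 := by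
  rw [← one_mul (realHermite m), integral_eval_mul_realHermite]
  cases m with
  | zero => simpa using integral_exp_neg_sq_div_two
  | succ m => simp [Function.iterate_succ_apply]

theorem integral_realHermite_mul_realHermite (i j : ℕ) :
    ∫ y, (realHermite i).eval y * (realHermite j).eval y * exp (-y ^ 2 / 2) =
      if i = j then i ! * √(2 * π) else 0 := by
  simp_rw [← eval_mul]
  rw [integral_eval_mul_realHermite, realHermite.iterate_derivative]
  simp_rw [eval_smul, smul_eq_mul, mul_assoc]
  rw [integral_const_mul, integral_eval_realHermite]
  rcases lt_trichotomy i j with h | rfl | h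
  · simp [Nat.descFactorial_eq_zero_iff_lt.mpr h, h.ne]
  · simp [Nat.descFactorial_self]
  · simp [Nat.sub_eq_zero_iff_le, h.not_ge, h.ne']

theorem integral_realHermite_shift_mul (n : ℕ) (a : ℝ) :
    ∫ y, (realHermite n).eval (y + a) * (realHermite n).eval (y - a) * exp (-y ^ 2 / 2) =
      n ! * √(2 * π) * laguerre n (a ^ 2) := by
  set c : ℕ → ℝ := fun k => n.choose k * a ^ k
  set d : ℕ → ℝ := fun j => n.choose j * (-a) ^ j
  have hexpand (y : ℝ) :
      (realHermite n).eval (y + a) * (realHermite n).eval (y - a) * exp (-y ^ 2 / 2) =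
        ∑ k ∈ range (n + 1), ∑ j ∈ range (n + 1), c k * d j *
          ((realHermite (n - k)).eval y * (realHermite (n - j)).eval y * exp (-y ^ 2 / 2)) := by
    rw [sub_eq_add_neg, realHermite.eval_add, realHermite.eval_add, sum_mul_sum, sum_mul]
    refine sum_congr rfl fun k _ => ?_
    rw [sum_mul]
    exact sum_congr rfl fun j _ => by ring
  have hint (i j : ℕ) : Integrable fun y =>
      (realHermite i).eval y * (realHermite j).eval y * exp (-y ^ 2 / 2) := by
    simpa only [eval_mul] using
      integrable_eval_mul_exp_neg_sq_div_two (realHermite i * realHermite j)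
  calc _ = ∑ k ∈ range (n + 1), ∑ j ∈ range (n + 1), c k * d j *
          ∫ y, (realHermite (n - k)).eval y * (realHermite (n - j)).eval y * exp (-y ^ 2 / 2) := by
        simp_rw [hexpand]
        rw [integral_finsetSum _ fun k _ =>
          integrable_finsetSum _ fun j _ => (hint _ _).const_mul _]
        refine sum_congr rfl fun k _ => ?_
        rw [integral_finsetSum _ fun j _ => (hint _ _).const_mul _]
        simp_rw [integral_const_mul]
    _ = ∑ k ∈ range (n + 1), c k * d k * ((n - k)! * √(2 * π)) := by
        refine sum_congr rfl fun k hk => ?_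
        simp_rw [integral_realHermite_mul_realHermite]
        rw [sum_eq_single_of_mem k hk fun j hj hjk => ?_, if_pos rfl]
        rw [if_neg (by simp only [mem_range] at hk hj; omega), mul_zero]
    _ = n ! * √(2 * π) * laguerre n (a ^ 2) := by
        rw [laguerre, mul_sum]
        refine sum_congr rfl fun k hk => ?_
        have hfac : (n.choose k : ℝ) * k ! * (n - k)! = n ! := by
          exact_mod_cast Nat.choose_mul_factorial_mul_factorial (mem_range_succ_iff.mp hk)
        simp only [c, d]
        field_simp
        linear_combination (n.choose k * (-a ^ 2) ^ k) * hfac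

theorem abs_integral_mul_comp_add_comp_sub_le {f : ℝ → ℝ} (hf : Integrable fun t => f t ^ 2)
    (a : ℝ) : |∫ y, f (y + a) * f (y - a)| ≤ ∫ t, f t ^ 2 := by
  have hshift := (hf.comp_add_right a).add (hf.comp_sub_right a)
  calc |∫ y, f (y + a) * f (y - a)| ≤ ∫ y, |f (y + a) * f (y - a)| :=
        abs_integral_le_integral_abs
    _ ≤ ∫ y, (f (y + a) ^ 2 + f (y - a) ^ 2) / 2 := by
        refine integral_mono_of_nonneg (ae_of_all _ fun y => abs_nonneg _) (hshift.div_const 2)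
          (ae_of_all _ fun y => ?_)
        dsimp only
        rw [abs_mul]
        nlinarith [sq_nonneg (|f (y + a)| - |f (y - a)|), sq_abs (f (y + a)), sq_abs (f (y - a))]
    _ = ∫ t, f t ^ 2 := by
        rw [integral_div, integral_add (hf.comp_add_right a) (hf.comp_sub_right a),
          integral_add_right_eq_self (fun t => f t ^ 2),
          integral_sub_right_eq_self (fun t => f t ^ 2)]
        ring

/-- For every natural `n` and real `x ≥ 0`, `|L_n(x)| ≤ exp(x/2)`. -/
theorem abs_laguerre_le (n : ℕ) (x : ℝ) (hx : 0 ≤ x) :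
    |laguerre n x| ≤ Real.exp (x / 2) := by
  obtain ⟨a, rfl⟩ : ∃ a : ℝ, x = a ^ 2 := ⟨√x, (sq_sqrt hx).symm⟩
  set F : ℝ → ℝ := fun t => (realHermite n).eval t * exp (-t ^ 2 / 4)
  have hF_sq (t : ℝ) : F t ^ 2 =
      (realHermite n).eval t * (realHermite n).eval t * exp (-t ^ 2 / 2) := by
    rw [mul_pow, sq, ← exp_nat_mul]
    ring_nf
  have hF_shift (y : ℝ) : F (y + a) * F (y - a) = exp (-a ^ 2 / 2) *
      ((realHermite n).eval (y + a) * (realHermite n).eval (y - a) * exp (-y ^ 2 / 2)) := by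
    simp only [F]
    rw [mul_mul_mul_comm, ← exp_add, mul_left_comm, ← exp_add]
    ring_nf
  have hcs := abs_integral_mul_comp_add_comp_sub_le (f := F)
    (by simpa only [hF_sq, eval_mul] using
      integrable_eval_mul_exp_neg_sq_div_two (realHermite n * realHermite n)) a
  simp_rw [hF_sq, hF_shift] at hcs
  rw [integral_const_mul, integral_realHermite_shift_mul, integral_realHermite_mul_realHermite,
    if_pos rfl, abs_mul, abs_mul, abs_of_pos (exp_pos _), abs_of_pos (by positivity)] at hcs
  have hweighted : exp (-a ^ 2 / 2) * |laguerre n (a ^ 2)| ≤ 1 := by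
    rwa [mul_left_comm, mul_le_iff_le_one_right (by positivity)] at hcs
  calc |laguerre n (a ^ 2)| = exp (a ^ 2 / 2) * (exp (-a ^ 2 / 2) * |laguerre n (a ^ 2)|) := by
        rw [← mul_assoc, ← exp_add, neg_div, add_neg_cancel, exp_zero, one_mul]
    _ ≤ exp (a ^ 2 / 2) := mul_le_of_le_one_right (exp_pos _).le hweighted
end

section
/- For every real p ≥ 1, one has ( √(1 + p) / Γ(1 + p) )^{1/p} ≤ √2; equivalently, √(1 + p) ≤ 2^{p/2} · Γ(1 + p). -/
open Real

/-! Bernoulli's inequality gives `1 + p ≤ 2 ^ p`, hence `√(1 + p) ≤ 2 ^ (p / 2)`, and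
`Γ(1 + p) ≥ Γ(2) = 1` because `Γ` is increasing on `[2, ∞)`. Taking `p`-th roots turns the
resulting bound `√(1 + p) / Γ(1 + p) ≤ 2 ^ (p / 2)` into the first claim. -/

namespace Real

theorem one_add_le_two_rpow {p : ℝ} (hp : 1 ≤ p) : 1 + p ≤ 2 ^ p := by
  simpa [one_add_one_eq_two] using
    one_add_mul_self_le_rpow_one_add (by norm_num : (-1 : ℝ) ≤ 1) hp

theorem sqrt_one_add_le_two_rpow_half {p : ℝ} (hp : 1 ≤ p) : √(1 + p) ≤ 2 ^ (p / 2) := by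
  calc √(1 + p) ≤ √(2 ^ p) := sqrt_le_sqrt (one_add_le_two_rpow hp)
    _ = 2 ^ (p / 2) := by rw [sqrt_eq_rpow, ← rpow_mul zero_le_two, mul_one_div]

theorem one_le_Gamma_of_two_le {x : ℝ} (hx : 2 ≤ x) : 1 ≤ Gamma x :=
  Gamma_two ▸ Gamma_strictMonoOn_Ici.monotoneOn Set.self_mem_Ici hx hx

end Real

/-- For every real `p ≥ 1`, `(√(1+p)/Γ(1+p))^{1/p} ≤ √2`; equivalently,
`√(1+p) ≤ 2^{p/2} Γ(1+p)`. -/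
theorem sqrt_div_gamma_rpow_le (p : ℝ) (hp : 1 ≤ p) :
    (Real.sqrt (1 + p) / Real.Gamma (1 + p)) ^ (1 / p) ≤ Real.sqrt 2
    ∧ Real.sqrt (1 + p) ≤ (2 : ℝ) ^ (p / 2) * Real.Gamma (1 + p) := by
  have hΓ : 1 ≤ Gamma (1 + p) := one_le_Gamma_of_two_le (by linarith)
  have hΓ_pos : 0 < Gamma (1 + p) := one_pos.trans_le hΓ
  have hbound : √(1 + p) ≤ 2 ^ (p / 2) * Gamma (1 + p) :=
    calc √(1 + p) ≤ 2 ^ (p / 2) := sqrt_one_add_le_two_rpow_half hp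
      _ ≤ 2 ^ (p / 2) * Gamma (1 + p) := le_mul_of_one_le_right (by positivity) hΓ
  refine ⟨?_, hbound⟩
  rw [one_div, rpow_inv_le_iff_of_pos (by positivity) (sqrt_nonneg 2) (by linarith),
    ← rpow_div_two_eq_sqrt p zero_le_two, div_le_iff₀ hΓ_pos]
  exact hbound
end
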